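/- arXiv:2402.11591 — 4 statements merged into one kernel-verified Lean document; each statement's English description precedes it below -/
import Mathlib

section
/- Let A : [0,a] → [0,b] be an increasing function with A(0) = 0, A(a) = b, right continuous on (0,a), and let B be its right inverse. Then A is in turn the right inverse of B, i.e. A(s) = inf{r ∈ [0,b] : B(r) > s} for every s ∈ (0,a). -/
open Set Function

/-- Let `A : [0,a] → [0,b]` be increasing with `A 0 = 0`, `A a = b`,
right continuous on `(0,a)`, and let `B` be its right inverse. Then `A` is in turn the
right inverse of `B`: `A s = inf {r ∈ [0,b] : B r > s}` for every `s ∈ (0,a)`. -/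
theorem stmt_3 (a b : ℝ) (ha : 0 < a) (hb : 0 < b)
    (A B : ℝ → ℝ)
    (hAmono : MonotoneOn A (Icc 0 a))
    (hA0 : A 0 = 0) (hAa : A a = b)
    (hArc : ∀ s ∈ Ioo 0 a, ContinuousWithinAt A (Ici s) s)
    (hB0 : B 0 = 0)
    (hB : ∀ r ∈ Ioo 0 b, B r = sInf {s ∈ Icc 0 a | r < A s})
    (hBb : B b = a) :
    ∀ s ∈ Ioo 0 a, A s = sInf {r ∈ Icc 0 b | s < B r} := by
  intro s hs
  obtain ⟨hs0, hsa⟩ := hs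
  have hsIcc : s ∈ Icc 0 a := ⟨hs0.le, hsa.le⟩
  set T := {r ∈ Icc 0 b | s < B r} with hT
  have hbT : b ∈ T := ⟨⟨hb.le, le_rfl⟩, by rw [hBb]; exact hsa⟩
  have hTbdd : BddBelow T := ⟨0, fun r hr => hr.1.1⟩
  have hAsb : A s ≤ b := by
    rw [← hAa]; exact hAmono hsIcc ⟨ha.le, le_rfl⟩ hsa.le
  -- A s is a lower bound for T
  have hlb : ∀ r ∈ T, A s ≤ r := by
    intro r hr
    obtain ⟨⟨hr0, hrb⟩, hsBr⟩ := hr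
    rcases eq_or_lt_of_le hrb with h | hrb'
    · rw [h]; exact hAsb
    rcases eq_or_lt_of_le hr0 with h | hr0'
    · exfalso; rw [← h, hB0] at hsBr; linarith
    by_contra hcon
    push_neg at hcon
    have hmem : s ∈ {t ∈ Icc 0 a | r < A t} := ⟨hsIcc, hcon⟩
    have hbdd : BddBelow {t ∈ Icc 0 a | r < A t} := ⟨0, fun t ht => ht.1.1⟩
    have : B r ≤ s := by
      rw [hB r ⟨hr0', hrb'⟩]; exact csInf_le hbdd hmem
    linarith
  have h1 : A s ≤ sInf T := le_csInf ⟨b, hbT⟩ hlb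
  have h2 : sInf T ≤ A s := by
    refine le_of_forall_pos_le_add (fun ε hε => ?_)
    rcases lt_or_ge (A s + ε/2) b with hlt | hge
    · set r := A s + ε/2 with hr
      have hAsr : A s < r := by rw [hr]; linarith
      have hr0 : 0 < r := by
        have : 0 ≤ A s := by rw [← hA0]; exact hAmono ⟨le_rfl, ha.le⟩ hsIcc hs0.le
        linarith
      -- right continuity: get δ
      have hcont := hArc s ⟨hs0, hsa⟩
      have hev : A ⁻¹' Iio r ∈ nhdsWithin s (Ici s) := hcont (Iio_mem_nhds hAsr)
      rw [Metric.mem_nhdsWithin_iff] at hev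
      obtain ⟨δ, hδ, hball⟩ := hev
      -- the set defining B r
      set S := {t ∈ Icc 0 a | r < A t} with hS
      have haS : a ∈ S := ⟨⟨ha.le, le_rfl⟩, by rw [hAa]; exact hlt⟩
      have hSlb : ∀ t ∈ S, s + δ ≤ t := by
        intro t ht
        obtain ⟨htIcc, hrAt⟩ := ht
        by_contra hcon
        push_neg at hcon
        rcases le_or_gt t s with hts | hst
        · have : A t ≤ A s := hAmono htIcc hsIcc hts
          linarith
        · have htb : t ∈ Metric.ball s δ ∩ Ici s := by
            constructor
            · rw [Metric.mem_ball, Real.dist_eq, abs_lt]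
              constructor <;> linarith
            · exact hst.le
          have : A t < r := hball htb
          linarith
      have hBr : s < B r := by
        rw [hB r ⟨hr0, hlt⟩]
        have : s + δ ≤ sInf S := le_csInf ⟨a, haS⟩ hSlb
        linarith
      have hrT : r ∈ T := ⟨⟨hr0.le, hlt.le⟩, hBr⟩
      have h3 := csInf_le hTbdd hrT
      rw [hr] at h3
      linarith
    · have := csInf_le hTbdd hbT
      linarith
  linarith
end

section
/- Let h > 0, let μ₁,…,μ_N be nonnegative finite Borel measures on [0,h], define φ(0) := 0 and φ(r) := r + Σᵢ₌₁ᴺ μᵢ([0,r]) for r ∈ (0,h], and let dφ denote the Lebesgue–Stieltjes measure on [0,h] associated with φ. Then Lebesgue measure on [0,h] and the continuous parts μᵢᶜ of the measures μᵢ are all absolutely continuous with respect to dφ; their Radon–Nikodym derivatives m_L := dLeb/dφ and mᵢᶜ := dμᵢᶜ/dφ satisfy 0 ≤ m_L ≤ 1 and 0 ≤ mᵢᶜ ≤ 1 dφ-almost everywhere; m_L(r) + Σᵢ₌₁ᴺ mᵢᶜ(r) = 1 for dφ-a.e. r outside the countable set of atoms of dφ; and m_L and every mᵢᶜ vanish dφ-a.e.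 on the set of atoms of dφ. -/
/-!
Comparing increments on half-open intervals gives `dφ = Leb + Σ μᵢ`, so `Leb|[0,h]` and every
`μᵢᶜ` are dominated by `dφ`: this gives absolute continuity and densities `≤ 1`. Split
`dφ = (Leb|[0,h] + Σ μᵢᶜ) + (Leb|[0,h]ᶜ + Σ μᵢ|atoms(μᵢ))`. Every atom of `μᵢ` is an atom of
`dφ`, so the second summand is null on `[0,h]` off the atoms of `dφ`, and there the density of the
first summand, `m_L + Σ mᵢᶜ`, is `1`. The atoms of `dφ` form a countable set, which is null for
the atomless measures `Leb` and `μᵢᶜ`, so their densities vanish there.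
-/

open Set Function MeasureTheory

/-- The continuous (non-atomic) part of a Borel measure on `ℝ`: the measure restricted
to the set of points that are not atoms. -/
noncomputable def contPart (ν : Measure ℝ) : Measure ℝ := ν.restrict {t | ν {t} = 0}

namespace MeasureTheory.Measure

variable {α : Type*} [MeasurableSpace α]

instance sigmaFinite_finsetSum {ι : Type*} (s : Finset ι) (μ : ι → Measure α)
    [∀ i, SigmaFinite (μ i)] : SigmaFinite (∑ i ∈ s, μ i) := by
  classical
  induction s using Finset.induction with
  | empty => rw [Finset.sum_empty]; infer_instance
  | insert a s _ _ => rw [Finset.sum_insert ‹_›]; infer_instance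

lemma rnDeriv_finsetSum {ι : Type*} (s : Finset ι) (ν : ι → Measure α) (μ : Measure α)
    [∀ i, SigmaFinite (ν i)] [SigmaFinite μ] :
    (∑ i ∈ s, ν i).rnDeriv μ =ᵐ[μ] ∑ i ∈ s, (ν i).rnDeriv μ := by
  classical
  induction s using Finset.induction with
  | empty => simp
  | insert a s ha ih =>
    filter_upwards [rnDeriv_add' (ν a) (∑ i ∈ s, ν i) μ, ih] with x hadd hsum
    simp_all [Finset.sum_insert ha]

lemma ae_restrict_rnDeriv_eq_zero {μ ν : Measure α} {s : Set α} (hs : ν s = 0) :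
    ∀ᵐ x ∂μ.restrict s, ν.rnDeriv μ x = 0 := by
  have hint : ∫⁻ x in s, ν.rnDeriv μ x ∂μ = 0 :=
    nonpos_iff_eq_zero.1 (hs ▸ setLIntegral_rnDeriv_le s)
  exact (lintegral_eq_zero_iff (measurable_rnDeriv ν μ)).1 hint

lemma le_add_finsetSum {ι : Type*} [Fintype ι] (ν : Measure α) (μ : ι → Measure α) (i : ι) :
    μ i ≤ ν + ∑ j, μ j :=
  Measure.le_add_left (Finset.single_le_sum (fun j _ => Measure.zero_le (μ j)) (Finset.mem_univ i))

lemma ae_restrict_rnDeriv_add_eq_one {ν ν' : Measure α} [SigmaFinite ν] [SigmaFinite ν']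
    {s : Set α} (hs : ν' s = 0) :
    ∀ᵐ x ∂(ν + ν').restrict s, ν.rnDeriv (ν + ν') x = 1 := by
  filter_upwards [ae_restrict_of_ae (rnDeriv_self (ν + ν')),
    ae_restrict_of_ae (rnDeriv_add' ν ν' (ν + ν')), ae_restrict_rnDeriv_eq_zero hs]
    with x hself hadd hzero
  simpa [hself, hzero] using hadd.symm

lemma countable_setOf_measure_singleton_ne_zero [MeasurableSingletonClass α] (μ : Measure α)
    [SFinite μ] : {x | μ {x} ≠ 0}.Countable := by
  simpa [pos_iff_ne_zero] using countable_meas_level_set_pos (μ := μ) measurable_id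

lemma ae_restrict_atoms_rnDeriv_eq_zero [MeasurableSingletonClass α] (μ ν : Measure α) [SFinite μ]
    [NullSingletonClass ν] : ∀ᵐ x ∂μ.restrict {x | μ {x} ≠ 0}, ν.rnDeriv μ x = 0 :=
  ae_restrict_rnDeriv_eq_zero ((countable_setOf_measure_singleton_ne_zero μ).measure_zero ν)

end MeasureTheory.Measure

open Measure

instance nullSingletonClass_contPart (ν : Measure ℝ) : NullSingletonClass (contPart ν) where
  measure_singleton x := by
    rw [contPart, restrict_apply (measurableSet_singleton x)]
    by_cases hx : ν {x} = 0
    · exact measure_mono_null inter_subset_left hx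
    · simp [hx]

instance sigmaFinite_contPart (ν : Measure ℝ) [SigmaFinite ν] : SigmaFinite (contPart ν) := by
  rw [contPart]; infer_instance

lemma contPart_add_restrict_atoms (ν : Measure ℝ) [SFinite ν] :
    contPart ν + ν.restrict {x | ν {x} ≠ 0} = ν :=
  restrict_add_restrict_compl
    (MeasurableSet.of_compl (countable_setOf_measure_singleton_ne_zero ν).measurableSet)

lemma measure_Iic_eq_measure_Icc_of_measure_compl_eq_zero {μ : Measure ℝ} {a b : ℝ}
    (hμ : μ (Icc a b)ᶜ = 0) (r : ℝ) : μ (Iic r) = μ (Icc a r) :=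
  le_antisymm
    (calc μ (Iic r) = μ (Iic r ∩ Icc a b) := (measure_inter_conull hμ).symm
      _ ≤ μ (Icc a r) := measure_mono fun _ hx => ⟨hx.2.1, hx.1⟩)
    (measure_mono Icc_subset_Iic_self)

lemma StieltjesFunction.measure_eq_volume_add_sum {ι : Type*} [Fintype ι] (μ : ι → Measure ℝ)
    [∀ i, IsFiniteMeasure (μ i)] (F : StieltjesFunction ℝ)
    (hF : ∀ r, F r = r + ∑ i, (μ i).real (Iic r)) : F.measure = volume + ∑ i, μ i := by
  refine ext_of_Ioc _ _ fun a b hab => ?_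
  have hIoc (i : ι) : (μ i).real (Ioc a b) = (μ i).real (Iic b) - (μ i).real (Iic a) := by
    rw [← Iic_sdiff_Iic, measureReal_sdiff (Iic_subset_Iic.2 hab.le) measurableSet_Iic]
  rw [F.measure_Ioc, Measure.add_apply, Real.volume_Ioc, finsetSum_apply]
  simp_rw [← ofReal_measureReal (measure_ne_top _ (Ioc a b))]
  rw [← ENNReal.ofReal_sum_of_nonneg fun i _ => measureReal_nonneg,
    ← ENNReal.ofReal_add (sub_nonneg.2 hab.le) (Finset.sum_nonneg fun i _ => measureReal_nonneg),
    hF, hF]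
  simp only [hIoc, Finset.sum_sub_distrib]
  ring_nf

lemma ae_restrict_rnDeriv_restrict_add_sum_contPart_eq_one {ι : Type*} [Fintype ι]
    (ν : Measure ℝ) [SigmaFinite ν] (μ : ι → Measure ℝ) [∀ i, SigmaFinite (μ i)] {A : Set ℝ}
    (hA : MeasurableSet A) :
    ∀ᵐ r ∂(ν + ∑ i, μ i).restrict (A \ {t | (ν + ∑ i, μ i) {t} ≠ 0}),
      (ν.restrict A).rnDeriv (ν + ∑ i, μ i) r + ∑ i, (contPart (μ i)).rnDeriv (ν + ∑ i, μ i) r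
        = 1 := by
  set S := {t | (ν + ∑ i, μ i) {t} ≠ 0}
  have hsplit : ν + ∑ i, μ i = (ν.restrict A + ∑ i, contPart (μ i))
      + (ν.restrict Aᶜ + ∑ i, (μ i).restrict {t | μ i {t} ≠ 0}) := by
    conv_lhs => rw [← restrict_add_restrict_compl (μ := ν) hA,
      ← Finset.sum_congr rfl fun i _ => contPart_add_restrict_atoms (μ i)]
    rw [Finset.sum_add_distrib]
    abel
  have hatoms (i : ι) : {t | μ i {t} ≠ 0} ⊆ S := fun t ht h0 =>
    ht (le_zero_iff.1 (h0 ▸ le_add_finsetSum ν μ i {t}))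
  have hnull : (ν.restrict Aᶜ + ∑ i, (μ i).restrict {t | μ i {t} ≠ 0}) (A \ S) = 0 := by
    have hAS : MeasurableSet (A \ S) :=
      hA.diff (countable_setOf_measure_singleton_ne_zero _).measurableSet
    simp only [Measure.add_apply, finsetSum_apply, restrict_apply hAS]
    rw [(disjoint_compl_right.mono_left sdiff_subset).inter_eq, measure_empty, zero_add]
    refine Finset.sum_eq_zero fun i _ => ?_
    rw [(disjoint_sdiff_left.mono_right (hatoms i)).inter_eq, measure_empty]
  rw [hsplit]
  filter_upwards [ae_restrict_rnDeriv_add_eq_one hnull,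
    ae_restrict_of_ae (rnDeriv_add' (ν.restrict A) (∑ i, contPart (μ i)) _),
    ae_restrict_of_ae (rnDeriv_finsetSum Finset.univ (fun i => contPart (μ i)) _)]
    with r hone hadd hsum
  rw [← hone, hadd, Pi.add_apply, hsum, Finset.sum_apply]

theorem stmt_7_general (N : ℕ) (h : ℝ)
    (μs : Fin N → Measure ℝ)
    (hfin : ∀ i, IsFiniteMeasure (μs i))
    (hsupp : ∀ i, μs i ((Icc (0:ℝ) h)ᶜ) = 0)
    (φ : StieltjesFunction ℝ)
    (hφ : ∀ r : ℝ, φ r = if r < 0 then r else r + ∑ i, ((μs i) (Icc 0 r)).toReal) :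
    (volume.restrict (Icc (0:ℝ) h) ≪ φ.measure) ∧
    (∀ i, contPart (μs i) ≪ φ.measure) ∧
    (∀ᵐ r ∂φ.measure, (volume.restrict (Icc (0:ℝ) h)).rnDeriv φ.measure r ≤ 1) ∧
    (∀ i, ∀ᵐ r ∂φ.measure, (contPart (μs i)).rnDeriv φ.measure r ≤ 1) ∧
    (∀ᵐ r ∂(φ.measure.restrict (Icc (0:ℝ) h \ {t | φ.measure {t} ≠ 0})),
      (volume.restrict (Icc (0:ℝ) h)).rnDeriv φ.measure r
        + ∑ i, (contPart (μs i)).rnDeriv φ.measure r = 1) ∧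
    (∀ᵐ r ∂(φ.measure.restrict {t | φ.measure {t} ≠ 0}),
      (volume.restrict (Icc (0:ℝ) h)).rnDeriv φ.measure r = 0 ∧
      ∀ i, (contPart (μs i)).rnDeriv φ.measure r = 0) := by
  have hφ_Iic (r : ℝ) : φ r = r + ∑ i, (μs i).real (Iic r) := by
    simp only [measureReal_def, measure_Iic_eq_measure_Icc_of_measure_compl_eq_zero (hsupp _)]
    rcases lt_or_ge r 0 with hr | hr
    · simp [hφ, hr]
    · simp [hφ, hr.not_gt]
  rw [φ.measure_eq_volume_add_sum μs hφ_Iic]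
  have hvol_le : volume.restrict (Icc 0 h) ≤ volume + ∑ i, μs i :=
    Measure.le_add_right Measure.restrict_le_self
  have hcont_le (i : Fin N) : contPart (μs i) ≤ volume + ∑ i, μs i :=
    Measure.restrict_le_self.trans (le_add_finsetSum volume μs i)
  refine ⟨hvol_le.absolutelyContinuous, fun i => (hcont_le i).absolutelyContinuous,
    rnDeriv_le_one_of_le hvol_le, fun i => rnDeriv_le_one_of_le (hcont_le i),
    ae_restrict_rnDeriv_restrict_add_sum_contPart_eq_one volume μs measurableSet_Icc, ?_⟩
  filter_upwards [ae_restrict_atoms_rnDeriv_eq_zero _ (volume.restrict (Icc 0 h)),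
    ae_all_iff.2 fun i => ae_restrict_atoms_rnDeriv_eq_zero _ (contPart (μs i))]
    with r hvol hcont using ⟨hvol, hcont⟩

/-- Let `h > 0`, let `μ₁,…,μ_N` be nonnegative finite Borel measures on
`[0,h]`, and let `φ` be the (right-continuous version of) the function
`φ r = r + Σᵢ μᵢ([0,r])` for `r ≥ 0`, `φ r = r` for `r < 0`, with associated
Lebesgue–Stieltjes measure `dφ = φ.measure`. Then Lebesgue measure on `[0,h]` and the
continuous parts `μᵢᶜ` are absolutely continuous w.r.t. `dφ`; the Radon–Nikodym
derivatives `m_L = d Leb|_{[0,h]}/dφ` and `mᵢᶜ = dμᵢᶜ/dφ` are between `0` and `1`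
`dφ`-a.e.; `m_L + Σᵢ mᵢᶜ = 1` `dφ`-a.e. on `[0,h]` outside the atoms of `dφ`; and
`m_L`, `mᵢᶜ` vanish `dφ`-a.e. on the set of atoms of `dφ`. -/
theorem stmt_7 (N : ℕ) (hN : 1 ≤ N) (h : ℝ) (hh : 0 < h)
    (μs : Fin N → Measure ℝ)
    (hfin : ∀ i, IsFiniteMeasure (μs i))
    (hsupp : ∀ i, μs i ((Icc (0:ℝ) h)ᶜ) = 0)
    (φ : StieltjesFunction ℝ)
    (hφ : ∀ r : ℝ, φ r = if r < 0 then r else r + ∑ i, ((μs i) (Icc 0 r)).toReal) :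
    (volume.restrict (Icc (0:ℝ) h) ≪ φ.measure) ∧
    (∀ i, contPart (μs i) ≪ φ.measure) ∧
    (∀ᵐ r ∂φ.measure, (volume.restrict (Icc (0:ℝ) h)).rnDeriv φ.measure r ≤ 1) ∧
    (∀ i, ∀ᵐ r ∂φ.measure, (contPart (μs i)).rnDeriv φ.measure r ≤ 1) ∧
    (∀ᵐ r ∂(φ.measure.restrict (Icc (0:ℝ) h \ {t | φ.measure {t} ≠ 0})),
      (volume.restrict (Icc (0:ℝ) h)).rnDeriv φ.measure r
        + ∑ i, (contPart (μs i)).rnDeriv φ.measure r = 1) ∧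
    (∀ᵐ r ∂(φ.measure.restrict {t | φ.measure {t} ≠ 0}),
      (volume.restrict (Icc (0:ℝ) h)).rnDeriv φ.measure r = 0 ∧
      ∀ i, (contPart (μs i)).rnDeriv φ.measure r = 0) :=
  stmt_7_general N h μs hfin hsupp φ hφ
end

section
/- Let (εᵢ) be a sequence in (0, 1/4) with εᵢ → 0. For each i let uᵢ : [0,2] → [0,∞) be equal to εᵢ⁻¹ on [1/2, 1/2+εᵢ] ∪ [3/2−εᵢ, 3/2] and 0 elsewhere, and let xᵢ : [−1,2] → ℝ be the unique solution, absolutely continuous on [0,2], of the delay differential equation ẋᵢ(t) = xᵢ(t) xᵢ(t−1) uᵢ(t) for a.e. t ∈ [0,2], with xᵢ(t) = 1 for all t ∈ [−1,0]. Then for every t ∈ [0,2] \ {1/2, 3/2}, xᵢ(t) → x(t) as i → ∞, where x(t) = 1 for t ∈ [0,1/2), x(t) = e for t ∈ [1/2, 3/2), and x(t) = e² for t ∈ [3/2, 2]. -/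
/-!
On `[0, 1/2]` the control vanishes, so `xᵢ = 1`. On the first pulse `[1/2, 1/2 + εᵢ]` the delayed
value `xᵢ(t - 1)` is the history `1`, so the equation is the linear ODE `ẋ = εᵢ⁻¹ x`, which
multiplies `xᵢ` by `exp (εᵢ⁻¹ · εᵢ) = e`. Between the pulses `xᵢ` stays at `e`, and on the second
pulse `[3/2 - εᵢ, 3/2]` the delayed value lies in `[0, 1/2]`, where `xᵢ = 1`, so `xᵢ` gains
another factor `e`. These values are exact for each `i`; away from `1/2` and `3/2` the sequence
`xᵢ(t)` is therefore eventually constant.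
-/

open Set Filter Topology MeasureTheory

theorem eqOn_mul_exp_of_eq_add_integral {g : ℝ → ℝ} {a b k : ℝ} (hg : ContinuousOn g (Icc a b))
    (h : ∀ r ∈ Icc a b, g r = g a + ∫ s in a..r, k * g s) :
    EqOn g (fun r => g a * Real.exp (k * (r - a))) (Icc a b) := by
  have hkg : ContinuousOn (fun s => k * g s) (Icc a b) := continuousOn_const.mul hg
  have hderiv : ∀ r ∈ Ico a b, HasDerivWithinAt g (k * g r) (Ici r) r := by
    intro r hr
    have hnhds : Icc a b ∈ 𝓝[>] r := Icc_mem_nhdsGT_of_mem hr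
    have hint : IntervalIntegrable (fun s => k * g s) volume a r :=
      (hkg.mono (uIcc_subset_Icc (left_mem_Icc.2 (hr.1.trans hr.2.le))
        (Ico_subset_Icc_self hr))).intervalIntegrable
    have hprim := (intervalIntegral.integral_hasDerivWithinAt_right hint (s := Ici r) (t := Ioi r)
      ((hkg.stronglyMeasurableAtFilter_nhdsWithin measurableSet_Icc r).filter_mono
        (nhdsWithin_le_of_mem hnhds))
      ((hkg r (Ico_subset_Icc_self hr)).mono_of_mem_nhdsWithin hnhds)).const_add (g a)
    refine hprim.congr_of_eventuallyEq ?_ (h r (Ico_subset_Icc_self hr))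
    filter_upwards [Icc_mem_nhdsGE_of_mem hr] with s hs using h s hs
  refine (ODE_solution_unique_of_mem_Icc_right (v := fun _ x => k * x) (s := fun _ => univ)
    (fun _ _ => (lipschitzWith_smul k).lipschitzOnWith) hg hderiv (fun _ _ => mem_univ _)
    ?_ ?_ (fun _ _ => mem_univ _) (by simp))
  · fun_prop
  · intro r _
    have := (((hasDerivAt_id' r).sub_const a).const_mul k).exp.const_mul (g a)
    convert this.hasDerivWithinAt using 1
    ring

section IntegralEquation

variable {f X : ℝ → ℝ} {a c k p q : ℝ}

theorem eq_add_integral_of_intervalIntegrable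
    (hX : ∀ r ∈ Icc p q, X r = c + ∫ s in a..r, f s)
    (hIp : IntervalIntegrable f volume a p) (hIq : IntervalIntegrable f volume a q) :
    ∀ r ∈ Icc p q, X r = X p + ∫ s in p..r, f s := by
  intro r hr
  have hIpr : IntervalIntegrable f volume p r :=
    (hIp.symm.trans hIq).mono_set (uIcc_subset_uIcc_left (uIcc_of_le (hr.1.trans hr.2) ▸ hr))
  rw [hX r hr, hX p (left_mem_Icc.2 (hr.1.trans hr.2)),
    ← intervalIntegral.integral_add_adjacent_intervals hIp hIpr, add_assoc]

theorem continuousOn_of_eq_add_integral (hpq : p ≤ q)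
    (hX : ∀ r ∈ Icc p q, X r = c + ∫ s in a..r, f s)
    (hIp : IntervalIntegrable f volume a p) (hIq : IntervalIntegrable f volume a q) :
    ContinuousOn X (Icc p q) := by
  have hprim := intervalIntegral.continuousOn_primitive_interval' (hIp.symm.trans hIq)
    left_mem_uIcc
  rw [uIcc_of_le hpq] at hprim
  exact (continuousOn_const.add hprim).congr (eq_add_integral_of_intervalIntegrable hX hIp hIq)

theorem eqOn_mul_exp_of_eq_mul (hfX : ∀ s ∈ Icc p q, f s = k * X s)
    (hX : ∀ r ∈ Icc p q, X r = c + ∫ s in a..r, f s)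
    (hIp : IntervalIntegrable f volume a p) (hIq : IntervalIntegrable f volume a q) :
    EqOn X (fun r => X p * Real.exp (k * (r - p))) (Icc p q) := by
  rcases lt_or_ge q p with hqp | hpq
  · simp [Icc_eq_empty_of_lt hqp]
  refine eqOn_mul_exp_of_eq_add_integral (continuousOn_of_eq_add_integral hpq hX hIp hIq)
    fun r hr => ?_
  rw [eq_add_integral_of_intervalIntegrable hX hIp hIq r hr]
  congr 1
  refine intervalIntegral.integral_congr fun s hs => hfX s ?_
  rw [uIcc_of_le hr.1] at hs
  exact ⟨hs.1, hs.2.trans hr.2⟩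

/-- Let `T` be the supremum of the points up to which `f` is integrable from `a`. Below `T`, `X` is
an exponential; above it the integral takes the junk value `0`, so `X = c`. Both pieces are
integrable. -/
theorem intervalIntegrable_of_eq_mul (hpq : p ≤ q) (hfX : ∀ s ∈ Icc p q, f s = k * X s)
    (hX : ∀ r ∈ Icc p q, X r = c + ∫ s in a..r, f s)
    (hIp : IntervalIntegrable f volume a p) : IntervalIntegrable f volume a q := by
  set S := {t ∈ Icc p q | IntervalIntegrable f volume a t}
  have hpS : p ∈ S := ⟨left_mem_Icc.2 hpq, hIp⟩
  have hSbdd : BddAbove S := ⟨q, fun t ht => ht.1.2⟩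
  set T := sSup S
  have hpT : p ≤ T := le_csSup hSbdd hpS
  have hTq : T ≤ q := csSup_le ⟨p, hpS⟩ fun t ht => ht.1.2
  have hbelow : EqOn f (fun s => k * (X p * Real.exp (k * (s - p)))) (Ioo p T) := by
    intro s hs
    obtain ⟨t, htS, hst⟩ := exists_lt_of_lt_csSup ⟨p, hpS⟩ hs.2
    have hsub : Icc p t ⊆ Icc p q := Icc_subset_Icc_right htS.1.2
    rw [hfX s ⟨hs.1.le, hst.le.trans htS.1.2⟩,
      eqOn_mul_exp_of_eq_mul (fun s hs => hfX s (hsub hs)) (fun r hr => hX r (hsub hr)) hIp htS.2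
        ⟨hs.1.le, hst.le⟩]
  have habove : EqOn f (fun _ => k * c) (Ioo T q) := by
    intro s hs
    have hnot : ¬IntervalIntegrable f volume a s := fun hI =>
      hs.1.not_ge (le_csSup hSbdd ⟨⟨hpT.trans hs.1.le, hs.2.le⟩, hI⟩)
    rw [hfX s ⟨hpT.trans hs.1.le, hs.2.le⟩, hX s ⟨hpT.trans hs.1.le, hs.2.le⟩,
      intervalIntegral.integral_undef hnot, add_zero]
  have hIpT : IntervalIntegrable f volume p T := by
    rw [intervalIntegrable_iff_integrableOn_Ioo_of_le hpT]
    refine IntegrableOn.congr_fun ?_ hbelow.symm measurableSet_Ioo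
    exact (Continuous.integrableOn_Icc (by fun_prop)).mono_set Ioo_subset_Icc_self
  have hITq : IntervalIntegrable f volume T q := by
    rw [intervalIntegrable_iff_integrableOn_Ioo_of_le hTq]
    exact (integrableOn_const measure_Ioo_lt_top.ne).congr_fun habove.symm measurableSet_Ioo
  exact (hIp.trans hIpT).trans hITq

theorem intervalIntegrable_of_eq_zero (hpq : p ≤ q) (hf0 : ∀ s ∈ Ioo p q, f s = 0)
    (hIp : IntervalIntegrable f volume a p) : IntervalIntegrable f volume a q := by
  refine hIp.trans ?_
  rw [intervalIntegrable_iff_integrableOn_Ioo_of_le hpq]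
  exact integrableOn_zero.congr_fun (fun s hs => (hf0 s hs).symm) measurableSet_Ioo

theorem eq_left_of_eq_zero (hf0 : ∀ s ∈ Ioo p q, f s = 0)
    (hX : ∀ r ∈ Icc p q, X r = c + ∫ s in a..r, f s)
    (hIp : IntervalIntegrable f volume a p) : ∀ r ∈ Icc p q, X r = X p := by
  intro r hr
  have hIq := intervalIntegrable_of_eq_zero (hr.1.trans hr.2) hf0 hIp
  rw [eq_add_integral_of_intervalIntegrable hX hIp hIq r hr, intervalIntegral.integral_of_le hr.1,
    integral_Ioc_eq_integral_Ioo,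
    setIntegral_eq_zero_of_forall_eq_zero fun s hs => hf0 s ⟨hs.1, hs.2.trans_le hr.2⟩, add_zero]

end IntegralEquation

theorem eq_of_pulse_delay_equation {E : ℝ} (hE : 0 < E) (hE2 : E ≤ 1/2) {u X : ℝ → ℝ}
    (hu : ∀ t, u t =
      if t ∈ Icc (1/2 : ℝ) (1/2 + E) ∪ Icc (3/2 - E) (3/2 : ℝ) then E⁻¹ else 0)
    (hist : ∀ t ∈ Icc (-1 : ℝ) 0, X t = 1)
    (hsol : ∀ t ∈ Icc (0:ℝ) 2, X t = 1 + ∫ s in (0:ℝ)..t, X s * X (s - 1) * u s) :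
    (∀ t ∈ Icc (0:ℝ) (1/2), X t = 1) ∧
    (∀ t ∈ Icc (1/2 + E) (3/2 - E), X t = Real.exp 1) ∧
    (∀ t ∈ Icc (3/2:ℝ) 2, X t = Real.exp 2) := by
  set f := fun s => X s * X (s - 1) * u s
  have hoff : ∀ s, s ∉ Icc (1/2 : ℝ) (1/2 + E) ∪ Icc (3/2 - E) (3/2 : ℝ) → f s = 0 :=
    fun s hs => by simp only [f, hu, if_neg hs, mul_zero]
  have hon : ∀ s ∈ Icc (1/2 : ℝ) (1/2 + E) ∪ Icc (3/2 - E) (3/2 : ℝ),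
      f s = E⁻¹ * (X s * X (s - 1)) :=
    fun s hs => by simp only [f, hu, if_pos hs]; ring
  have hsolOn : ∀ p q : ℝ, 0 ≤ p → q ≤ 2 → ∀ r ∈ Icc p q, X r = 1 + ∫ s in (0:ℝ)..r, f s :=
    fun p q hp hq r hr => hsol r ⟨hp.trans hr.1, hr.2.trans hq⟩
  have hI0 : IntervalIntegrable f volume 0 0 := .refl
  have hX0 : X 0 = 1 := by simpa using hsol 0 ⟨le_rfl, by norm_num⟩
  have hoff1 : ∀ s ∈ Ioo (0:ℝ) (1/2), f s = 0 := fun s hs =>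
    hoff s (by rintro (h | h) <;> linarith [hs.2, h.1])
  have hI1 := intervalIntegrable_of_eq_zero (by norm_num) hoff1 hI0
  have hX1 : ∀ t ∈ Icc (0:ℝ) (1/2), X t = 1 := fun t ht =>
    (eq_left_of_eq_zero hoff1 (hsolOn _ _ le_rfl (by norm_num)) hI0 t ht).trans hX0
  have hon2 : ∀ s ∈ Icc (1/2 : ℝ) (1/2 + E), f s = E⁻¹ * X s := fun s hs => by
    rw [hon s (Or.inl hs), hist (s - 1) ⟨by linarith [hs.1], by linarith [hs.2]⟩, mul_one]
  have hsol2 := hsolOn (1/2) (1/2 + E) (by norm_num) (by linarith)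
  have hI2 := intervalIntegrable_of_eq_mul (by linarith) hon2 hsol2 hI1
  have hXe : X (1/2 + E) = Real.exp 1 := by
    rw [eqOn_mul_exp_of_eq_mul hon2 hsol2 hI1 hI2 ⟨by linarith, le_rfl⟩]
    dsimp only
    rw [hX1 (1/2) ⟨by norm_num, le_rfl⟩, one_mul, add_sub_cancel_left, inv_mul_cancel₀ hE.ne']
  have hoff3 : ∀ s ∈ Ioo (1/2 + E) (3/2 - E), f s = 0 := fun s hs =>
    hoff s (by rintro (h | h) <;> linarith [hs.1, hs.2, h.1, h.2])
  have hsol3 := hsolOn (1/2 + E) (3/2 - E) (by linarith) (by linarith)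
  have hI3 := intervalIntegrable_of_eq_zero (by linarith) hoff3 hI2
  have hX3 : ∀ t ∈ Icc (1/2 + E) (3/2 - E), X t = Real.exp 1 := fun t ht =>
    (eq_left_of_eq_zero hoff3 hsol3 hI2 t ht).trans hXe
  have hon4 : ∀ s ∈ Icc (3/2 - E) (3/2 : ℝ), f s = E⁻¹ * X s := fun s hs => by
    rw [hon s (Or.inr hs), hX1 (s - 1) ⟨by linarith [hs.1], by linarith [hs.2]⟩, mul_one]
  have hsol4 := hsolOn (3/2 - E) (3/2) (by linarith) (by norm_num)
  have hI4 := intervalIntegrable_of_eq_mul (by linarith) hon4 hsol4 hI3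
  have hXe2 : X (3/2) = Real.exp 2 := by
    rw [eqOn_mul_exp_of_eq_mul hon4 hsol4 hI3 hI4 ⟨by linarith, le_rfl⟩]
    dsimp only
    rw [hX3 (3/2 - E) ⟨by linarith, le_rfl⟩, sub_sub_cancel, inv_mul_cancel₀ hE.ne',
      ← Real.exp_add]
    norm_num
  have hoff5 : ∀ s ∈ Ioo (3/2 : ℝ) 2, f s = 0 := fun s hs =>
    hoff s (by rintro (h | h) <;> linarith [hs.1, h.2])
  exact ⟨hX1, hX3, fun t ht =>
    (eq_left_of_eq_zero hoff5 (hsolOn _ _ (by norm_num) le_rfl) hI4 t ht).trans hXe2⟩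

/-- Let `εᵢ ∈ (0,1/4)` with `εᵢ → 0`, let
`uᵢ = εᵢ⁻¹` on `[1/2, 1/2+εᵢ] ∪ [3/2−εᵢ, 3/2]` and `0` elsewhere, and let `xᵢ` be the
unique absolutely continuous solution on `[0,2]` of `ẋᵢ(t) = xᵢ(t)xᵢ(t−1)uᵢ(t)` with
`xᵢ ≡ 1` on `[−1,0]` (encoded by the integral equation). Then for every
`t ∈ [0,2] \ {1/2, 3/2}`, `xᵢ(t) → x(t)`, where `x = 1` on `[0,1/2)`, `x = e` on
`[1/2,3/2)` and `x = e²` on `[3/2,2]`. -/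
theorem stmt_16 (ε : ℕ → ℝ) (hε : ∀ i, ε i ∈ Ioo (0:ℝ) (1/4))
    (hε0 : Tendsto ε atTop (nhds 0))
    (u : ℕ → ℝ → ℝ)
    (hu : ∀ i t, u i t =
      if t ∈ Icc (1/2 : ℝ) (1/2 + ε i) ∪ Icc (3/2 - ε i) (3/2 : ℝ) then (ε i)⁻¹ else 0)
    (x : ℕ → ℝ → ℝ)
    (hist : ∀ i, ∀ t ∈ Icc (-1 : ℝ) 0, x i t = 1)
    (hsol : ∀ i, ∀ t ∈ Icc (0:ℝ) 2,
      x i t = 1 + ∫ s in (0:ℝ)..t, x i s * x i (s - 1) * u i s) :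
    ∀ t ∈ Icc (0:ℝ) 2 \ {1/2, 3/2},
      Tendsto (fun i => x i t) atTop
        (nhds (if t < 1/2 then 1 else if t < 3/2 then Real.exp 1 else Real.exp 2)) := by
  rintro t ⟨⟨ht0, ht2⟩, htne⟩
  simp only [mem_insert_iff, mem_singleton_iff, not_or] at htne
  have hvalues i := eq_of_pulse_delay_equation (hε i).1 (by linarith [(hε i).2]) (hu i)
    (hist i) (hsol i)
  by_cases h1 : t < 1/2
  · rw [if_pos h1]
    exact tendsto_const_nhds.congr fun i => ((hvalues i).1 t ⟨ht0, h1.le⟩).symm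
  by_cases h2 : t < 3/2
  · rw [if_neg h1, if_pos h2]
    have ht1 : 1/2 < t := lt_of_le_of_ne (not_lt.1 h1) (Ne.symm htne.1)
    refine tendsto_const_nhds.congr' ?_
    filter_upwards [hε0.eventually (gt_mem_nhds (sub_pos.2 ht1)),
      hε0.eventually (gt_mem_nhds (sub_pos.2 h2))] with i hi1 hi2
    exact ((hvalues i).2.1 t ⟨by linarith, by linarith⟩).symm
  · rw [if_neg h1, if_neg h2]
    exact tendsto_const_nhds.congr fun i => ((hvalues i).2.2 t ⟨not_lt.1 h2, ht2⟩).symm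
end

section
/- Let (εᵢ) be a sequence in (0, 1/4) with εᵢ → 0. For each i let ũᵢ : [0,2] → [0,∞) be equal to εᵢ⁻¹ on [1/2−εᵢ, 1/2] ∪ [3/2, 3/2+εᵢ] and 0 elsewhere, and let x̃ᵢ : [−1,2] → ℝ be the unique solution, absolutely continuous on [0,2], of the delay differential equation ẋ̃ᵢ(t) = x̃ᵢ(t) x̃ᵢ(t−1) ũᵢ(t) for a.e. t ∈ [0,2], with x̃ᵢ(t) = 1 for all t ∈ [−1,0]. Then for every t ∈ [0,2] \ {1/2, 3/2}, x̃ᵢ(t) → x̃(t) as i → ∞, where x̃(t) = 1 for t ∈ [0,1/2), x̃(t) = e for t ∈ [1/2, 3/2), and x̃(t) = e^{1+e} for t ∈ (3/2, 2]. -/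
open Set Filter

/-!
Away from the two bumps `u` vanishes, so `x` is constant there. On each bump the delayed
factor `x (t - 1)` is already known (`1` on the first, `e` on the second), so the equation is
the linear ODE `ẋ = k x` with `k = ε⁻¹`, resp. `k = e ε⁻¹`, on an interval of length `ε`:
it multiplies `x` by `e`, resp. `e ^ e`, independently of `ε`.

The integral equation is read with the Bochner integral, which is `0` for a non-integrable
integrand; a supremum argument shows that this junk case never occurs.
-/

open MeasureTheory intervalIntegral Real Topology

theorem eqOn_mul_exp_of_eqOn_const_add_integral {x : ℝ → ℝ} {k c p q : ℝ}
    (hint : IntervalIntegrable (fun s => k * x s) volume p q)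
    (heq : EqOn x (fun t => c + ∫ s in p..t, k * x s) (Icc p q)) :
    EqOn x (fun t => c * exp (k * (t - p))) (Icc p q) := by
  intro t ht
  have hpq : p ≤ q := ht.1.trans ht.2
  have hxc : ContinuousOn x (Icc p q) := by
    refine (continuousOn_const.add ?_).congr heq
    simpa [uIcc_of_le hpq] using continuousOn_primitive_interval' hint left_mem_uIcc
  have hkxc : ContinuousOn (fun s => k * x s) (Icc p q) := continuousOn_const.mul hxc
  have hxderiv : ∀ t ∈ Ico p q, HasDerivWithinAt x (k * x t) (Ici t) t := by
    intro t ht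
    have hGT : Icc p q ∈ 𝓝[>] t := Icc_mem_nhdsGT_of_mem ht
    have hpt : IntervalIntegrable (fun s => k * x s) volume p t :=
      hint.mono_set (by simp [uIcc_of_le hpq, uIcc_of_le ht.1, Icc_subset_Icc_right ht.2.le])
    have hprim := integral_hasDerivWithinAt_right (s := Ici t) hpt
      ⟨Icc p q, hGT, hkxc.aestronglyMeasurable measurableSet_Icc⟩
      ((hkxc t (Ico_subset_Icc_self ht)).mono_of_mem_nhdsWithin hGT)
    exact (hprim.const_add c).congr_of_eventuallyEq
      (eventually_of_mem (Icc_mem_nhdsGE_of_mem ht) heq) (heq (Ico_subset_Icc_self ht))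
  have hexp : ∀ s,
      HasDerivAt (fun w => c * exp (k * (w - p))) (k * (c * exp (k * (s - p)))) s := by
    intro s
    have h := (((hasDerivAt_id' s).sub_const p).const_mul k).exp.const_mul c
    exact h.congr_deriv (by ring)
  have hlip : LipschitzWith ‖k‖₊ (fun y : ℝ => k * y) := by
    simpa [smul_eq_mul] using lipschitzWith_smul (β := ℝ) k
  refine ODE_solution_unique (v := fun _ y => k * y) (fun _ => hlip) hxc hxderiv
    (by fun_prop) (fun s _ => (hexp s).hasDerivWithinAt) ?_ ht
  simpa using heq (left_mem_Icc.mpr hpq)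

theorem intervalIntegrable_of_eq_const_add_integral_or_eq {x : ℝ → ℝ} {k c d p q : ℝ}
    (hpq : p ≤ q)
    (hint : ∀ t ∈ Icc p q, IntervalIntegrable (fun s => k * x s) volume p t →
      x t = c + ∫ s in p..t, k * x s)
    (hnot : ∀ t ∈ Icc p q, ¬ IntervalIntegrable (fun s => k * x s) volume p t → x t = d) :
    IntervalIntegrable (fun s => k * x s) volume p q := by
  set S := {r ∈ Icc p q | IntervalIntegrable (fun s => k * x s) volume p r}
  have hpS : p ∈ S := ⟨left_mem_Icc.mpr hpq, IntervalIntegrable.refl⟩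
  have hS : BddAbove S := ⟨q, fun r hr => hr.1.2⟩
  set m := sSup S
  have hpm : p ≤ m := le_csSup hS hpS
  have hmq : m ≤ q := csSup_le ⟨p, hpS⟩ fun r hr => hr.1.2
  have hpm_int : IntervalIntegrable (fun s => k * x s) volume p m := by
    refine ((by fun_prop : Continuous fun s => k * (c * exp (k * (s - p)))).intervalIntegrable
      p m).congr_uIoo fun s hs => ?_
    rw [uIoo_of_le hpm] at hs
    obtain ⟨r, ⟨hr, hpr⟩, hsr⟩ := exists_lt_of_lt_csSup ⟨p, hpS⟩ hs.2
    have hsub : ∀ t ∈ Icc p r, IntervalIntegrable (fun s => k * x s) volume p t := fun t ht =>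
      hpr.mono_set (by simp [uIcc_of_le ht.1, uIcc_of_le hr.1, Icc_subset_Icc_right ht.2])
    have hexp := eqOn_mul_exp_of_eqOn_const_add_integral hpr
      (fun t ht => hint t ⟨ht.1, ht.2.trans hr.2⟩ (hsub t ht))
    simp only [hexp ⟨hs.1.le, hsr.le⟩]
  -- beyond `m` the integral is junk, so `x` is the constant `d` there
  have hmq_int : IntervalIntegrable (fun s => k * x s) volume m q := by
    refine (intervalIntegrable_const (c := k * d)).congr_uIoo fun s hs => ?_
    rw [uIoo_of_le hmq] at hs
    have hsS : s ∉ S := fun h => (le_csSup hS h).not_gt hs.1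
    have hs_mem : s ∈ Icc p q := ⟨hpm.trans hs.1.le, hs.2.le⟩
    simp only [hnot s hs_mem fun h => hsS ⟨hs_mem, h⟩]
  exact hpm_int.trans hmq_int

theorem intervalIntegrable_and_eqOn_mul_exp_of_eqOn_mul {f x : ℝ → ℝ} {x₀ k r p q : ℝ}
    (hpq : p ≤ q) (hsol : EqOn x (fun t => x₀ + ∫ s in r..t, f s) (Icc p q))
    (hrp : IntervalIntegrable f volume r p) (hf : EqOn f (fun s => k * x s) (Ioo p q)) :
    IntervalIntegrable f volume r q ∧ EqOn x (fun t => x p * exp (k * (t - p))) (Icc p q) := by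
  have hf_iff : ∀ t ∈ Icc p q,
      IntervalIntegrable f volume p t ↔ IntervalIntegrable (fun s => k * x s) volume p t :=
    fun t ht => intervalIntegrable_congr_uIoo
      (hf.mono (by simp [uIoo_of_le ht.1, Ioo_subset_Ioo_right ht.2]))
  have hint : ∀ t ∈ Icc p q, IntervalIntegrable (fun s => k * x s) volume p t →
      x t = x p + ∫ s in p..t, k * x s := fun t ht hpt => by
    rw [hsol ht, hsol (left_mem_Icc.mpr hpq)]
    dsimp only
    rw [← integral_add_adjacent_intervals hrp ((hf_iff t ht).2 hpt), add_assoc,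
      integral_congr_uIoo (a := p) (b := t)
        (hf.mono (by simp [uIoo_of_le ht.1, Ioo_subset_Ioo_right ht.2]))]
  have hnot : ∀ t ∈ Icc p q,
      ¬ IntervalIntegrable (fun s => k * x s) volume p t → x t = x₀ := fun t ht hpt => by
      rw [hsol ht]
      dsimp only
      rw [integral_undef fun hrt => hpt ((hf_iff t ht).1 (hrp.symm.trans hrt)), add_zero]
  have hpq_int := intervalIntegrable_of_eq_const_add_integral_or_eq hpq hint hnot
  exact ⟨hrp.trans ((hf_iff q (right_mem_Icc.mpr hpq)).2 hpq_int),
    eqOn_mul_exp_of_eqOn_const_add_integral hpq_int fun t ht => hint t ht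
      (hpq_int.mono_set (by simp [uIcc_of_le ht.1, uIcc_of_le hpq, Icc_subset_Icc_right ht.2]))⟩

theorem intervalIntegrable_and_eqOn_const_of_eqOn_zero {f x : ℝ → ℝ} {x₀ r p q : ℝ}
    (hpq : p ≤ q) (hsol : EqOn x (fun t => x₀ + ∫ s in r..t, f s) (Icc p q))
    (hrp : IntervalIntegrable f volume r p) (hf : EqOn f 0 (Ioo p q)) :
    IntervalIntegrable f volume r q ∧ EqOn x (fun _ => x p) (Icc p q) := by
  obtain ⟨hrq, hx⟩ := intervalIntegrable_and_eqOn_mul_exp_of_eqOn_mul (k := 0) hpq hsol hrp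
    fun s hs => by simp [hf hs]
  exact ⟨hrq, fun t ht => by simpa using hx ht⟩

theorem intervalIntegrable_and_eq_mul_exp_of_eqOn_div {f x : ℝ → ℝ} {x₀ a r p q : ℝ}
    (hpq : p < q) (hsol : EqOn x (fun t => x₀ + ∫ s in r..t, f s) (Icc p q))
    (hrp : IntervalIntegrable f volume r p) (hf : EqOn f (fun s => a / (q - p) * x s) (Ioo p q)) :
    IntervalIntegrable f volume r q ∧ x q = x p * exp a := by
  obtain ⟨hrq, hx⟩ := intervalIntegrable_and_eqOn_mul_exp_of_eqOn_mul hpq.le hsol hrp hf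
  refine ⟨hrq, (hx (right_mem_Icc.mpr hpq.le)).trans ?_⟩
  dsimp only
  rw [div_mul_cancel₀ a (sub_ne_zero.mpr hpq.ne')]

theorem bump_delay_solution_profile {e : ℝ} (he : e ∈ Ioo (0:ℝ) (1/4)) {u x : ℝ → ℝ}
    (hu : ∀ t, u t =
      if t ∈ Icc (1/2 - e : ℝ) (1/2) ∪ Icc (3/2 : ℝ) (3/2 + e) then e⁻¹ else 0)
    (hist : ∀ t ∈ Icc (-1 : ℝ) 0, x t = 1)
    (hsol : ∀ t ∈ Icc (0:ℝ) 2, x t = 1 + ∫ s in (0:ℝ)..t, x s * x (s - 1) * u s) :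
    EqOn x (fun _ => 1) (Icc 0 (1/2 - e)) ∧ EqOn x (fun _ => exp 1) (Icc (1/2) (3/2)) ∧
      EqOn x (fun _ => exp (1 + exp 1)) (Icc (3/2 + e) 2) := by
  obtain ⟨he0, he4⟩ := he
  set f := fun s => x s * x (s - 1) * u s
  have hsol' : ∀ {p q : ℝ}, 0 ≤ p → q ≤ 2 →
      EqOn x (fun t => 1 + ∫ s in (0:ℝ)..t, f s) (Icc p q) :=
    fun hp hq t ht => hsol t ⟨hp.trans ht.1, ht.2.trans hq⟩
  have hf_off : ∀ s, s ∉ Icc (1/2 - e) (1/2) → s ∉ Icc (3/2) (3/2 + e) → f s = 0 := by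
    intro s h₁ h₂
    have hs : s ∉ Icc (1/2 - e) (1/2) ∪ Icc (3/2) (3/2 + e) := fun h => h.elim h₁ h₂
    simp only [f, hu s, if_neg hs, mul_zero]
  have hf_on : ∀ s ∈ Icc (1/2 - e) (1/2) ∪ Icc (3/2) (3/2 + e),
      f s = x (s - 1) / e * x s := by
    intro s hs
    simp only [f, hu s, if_pos hs]
    ring
  obtain ⟨hI₁, hx₁⟩ := intervalIntegrable_and_eqOn_const_of_eqOn_zero (p := 0)
    (q := 1/2 - e) (by linarith) (hsol' le_rfl (by linarith)) IntervalIntegrable.refl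
    (fun s hs => hf_off s (fun h => by linarith [h.1, hs.2]) fun h => by linarith [h.1, hs.2])
  have hx_init : EqOn x (fun _ => 1) (Icc 0 (1/2 - e)) :=
    fun t ht => (hx₁ ht).trans (hist 0 ⟨by norm_num, le_rfl⟩)
  obtain ⟨hI₂, hx_half⟩ := intervalIntegrable_and_eq_mul_exp_of_eqOn_div (p := 1/2 - e)
    (q := 1/2) (a := 1) (by linarith) (hsol' (by linarith) (by linarith)) hI₁ fun s hs => by
      rw [hf_on s (.inl ⟨hs.1.le, hs.2.le⟩),
        hist (s - 1) ⟨by linarith [hs.1], by linarith [hs.2]⟩, sub_sub_cancel]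
  rw [hx_init ⟨by linarith, le_rfl⟩, one_mul] at hx_half
  obtain ⟨hI₃, hx₃⟩ := intervalIntegrable_and_eqOn_const_of_eqOn_zero (p := 1/2) (q := 3/2)
    (by norm_num) (hsol' (by norm_num) (by norm_num)) hI₂
    (fun s hs => hf_off s (fun h => by linarith [h.2, hs.1]) fun h => by linarith [h.1, hs.2])
  have hx_mid : EqOn x (fun _ => exp 1) (Icc (1/2) (3/2)) := fun t ht => (hx₃ ht).trans hx_half
  obtain ⟨hI₄, hx_end⟩ := intervalIntegrable_and_eq_mul_exp_of_eqOn_div (p := 3/2)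
    (q := 3/2 + e) (a := exp 1) (by linarith) (hsol' (by norm_num) (by linarith)) hI₃
    fun s hs => by
      rw [hf_on s (.inr ⟨hs.1.le, hs.2.le⟩),
        hx_mid ⟨by linarith [hs.1], by linarith [hs.2]⟩, add_sub_cancel_left]
  rw [hx_mid ⟨by norm_num, le_rfl⟩, ← exp_add] at hx_end
  obtain ⟨-, hx₅⟩ := intervalIntegrable_and_eqOn_const_of_eqOn_zero (p := 3/2 + e) (q := 2)
    (by linarith) (hsol' (by linarith) le_rfl) hI₄
    (fun s hs => hf_off s (fun h => by linarith [h.2, hs.1]) fun h => by linarith [h.2, hs.1])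
  exact ⟨hx_init, hx_mid, fun t ht => (hx₅ ht).trans hx_end⟩

/-- Let `εᵢ ∈ (0,1/4)` with `εᵢ → 0`, let
`ũᵢ = εᵢ⁻¹` on `[1/2−εᵢ, 1/2] ∪ [3/2, 3/2+εᵢ]` and `0` elsewhere, and let `x̃ᵢ` be the
unique absolutely continuous solution on `[0,2]` of `ẋ̃ᵢ(t) = x̃ᵢ(t)x̃ᵢ(t−1)ũᵢ(t)` with
`x̃ᵢ ≡ 1` on `[−1,0]` (encoded by the integral equation). Then for every
`t ∈ [0,2] \ {1/2, 3/2}`, `x̃ᵢ(t) → x̃(t)`, where `x̃ = 1` on `[0,1/2)`, `x̃ = e` on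
`[1/2,3/2)` and `x̃ = e^{1+e}` on `(3/2,2]`. -/
theorem stmt_17 (ε : ℕ → ℝ) (hε : ∀ i, ε i ∈ Ioo (0:ℝ) (1/4))
    (hε0 : Tendsto ε atTop (nhds 0))
    (u : ℕ → ℝ → ℝ)
    (hu : ∀ i t, u i t =
      if t ∈ Icc (1/2 - ε i : ℝ) (1/2) ∪ Icc (3/2 : ℝ) (3/2 + ε i) then (ε i)⁻¹ else 0)
    (x : ℕ → ℝ → ℝ)
    (hist : ∀ i, ∀ t ∈ Icc (-1 : ℝ) 0, x i t = 1)
    (hsol : ∀ i, ∀ t ∈ Icc (0:ℝ) 2,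
      x i t = 1 + ∫ s in (0:ℝ)..t, x i s * x i (s - 1) * u i s) :
    ∀ t ∈ Icc (0:ℝ) 2 \ {1/2, 3/2},
      Tendsto (fun i => x i t) atTop
        (nhds (if t < 1/2 then 1 else if t < 3/2 then Real.exp 1
          else Real.exp (1 + Real.exp 1))) := by
  rintro t ⟨⟨ht0, ht2⟩, ht⟩
  simp only [mem_insert_iff, mem_singleton_iff, not_or] at ht
  have hprofile := fun i => bump_delay_solution_profile (hε i) (hu i) (hist i) (hsol i)
  rcases lt_or_gt_of_ne ht.1 with h₁ | h₁
  · rw [if_pos h₁]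
    refine tendsto_const_nhds.congr' ?_
    filter_upwards [hε0.eventually_lt_const (sub_pos.mpr h₁)] with i hi
    exact ((hprofile i).1 ⟨ht0, by linarith⟩).symm
  rw [if_neg (not_lt.mpr h₁.le)]
  rcases lt_or_gt_of_ne ht.2 with h₂ | h₂
  · rw [if_pos h₂]
    exact tendsto_const_nhds.congr fun i => ((hprofile i).2.1 ⟨h₁.le, h₂.le⟩).symm
  · rw [if_neg (not_lt.mpr h₂.le)]
    refine tendsto_const_nhds.congr' ?_
    filter_upwards [hε0.eventually_lt_const (sub_pos.mpr h₂)] with i hi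
    exact ((hprofile i).2.2 ⟨by linarith, ht2⟩).symm
end
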